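/- arXiv:2501.11180 — 2 statements merged into one kernel-verified Lean document; each statement's English description precedes it below -/
import Mathlib

section
/- For each i = 1, ..., d, let (X^i_1, ..., X^i_{n_i}) be a vector of indicator random variables with P(X^i_j = 1) = p_{i,j} ∈ (0,1), and set W_i = Σ_{j=1}^{n_i} X^i_j and λ_i = E(W_i) = Σ_{j=1}^{n_i} p_{i,j}. Suppose that for each i and each ℓ = 1, ..., n_i there is a random vector X^{i,(i,ℓ)} = ((X^{1,(i,ℓ)}_j)_{j=1}^{n_1}, ..., (X^{i-1,(i,ℓ)}_j)_{j=1}^{n_{i-1}}, (X^{i,(i,ℓ)}_j)_{j=1, j≠ℓ}^{n_i}), defined on the same probability space, whose law equals the conditional law of ((X^1_j)_{j=1}^{n_1}, ..., (X^{i-1}_j)_{j=1}^{n_{i-1}}, (X^i_j)_{j=1, j≠ℓ}^{n_i}) given X^i_ℓ = 1. Let I_1, ..., I_d be independent random variables, independent of all else, with P(I_i = j) = p_{i,j}/λ_i. Define W̃^i = (Σ_{j=1}^{n_1} X^{1,(i,I_i)}_j, ..., Σ_{j=1}^{n_{i-1}} X^{i-1,(i,I_i)}_j, Σ_{j=1,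 j≠I_i}^{n_i} X^{i,(i,I_i)}_j + 1). Then W̃ = (W̃^1, ..., W̃^d) is a size-biased coupling of W = (W_1, ..., W_d). -/
/-!
Fix `i` and write `W_i = ∑ ℓ, X_{iℓ}`. Since the `X_{iℓ}` are indicators,
`E[W_i f(W_0, …, W_i)] = ∑ ℓ, p_{iℓ} E[f(W_0, …, W_i) | X_{iℓ} = 1]`, and on `{X_{iℓ} = 1}` the
vector `(W_0, …, W_i)` is the function `rowSumsWithOne` of the array, which only sees the entries
kept by `sbRestrict`; so its conditional law is the law of the same function of the coupled
array `X'^{(i,ℓ)}`. Evaluating at the independent index `I_i` averages the latter expectations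
with weights `p_{iℓ} / λ_i`, which is `λ_i⁻¹` times the former sum.
-/

open MeasureTheory ProbabilityTheory Filter
open scoped ENNReal NNReal

/-- A triangular array `Wt = (Wt 1, ..., Wt d)`, where `Wt i` is an `(i+1)`-dimensional
random vector (indices `0, ..., i` in 0-based counting), is a *size-biased coupling* of the
random vector `W = (W 0, ..., W (d-1))` with means `lam` if for every `i` and every function
`f : ℝ^{i+1} → ℝ` with `E|W_i f(W_0, ..., W_i)| < ∞` one has
`E(W_i f(W_0, ..., W_i)) = lam i * E (f (Wt i))`. -/
def IsSizeBiasedCoupling {Ω : Type*} [MeasurableSpace Ω] (μ : Measure Ω) {d : ℕ}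
    (W : Fin d → Ω → ℕ) (lam : Fin d → ℝ)
    (Wt : (i : Fin d) → Ω → (Fin (i.1 + 1) → ℕ)) : Prop :=
  ∀ i : Fin d, ∀ f : (Fin (i.1 + 1) → ℝ) → ℝ,
    Integrable (fun ω => (W i ω : ℝ) * f fun j => (W (Fin.castLE i.isLt j) ω : ℝ)) μ →
    (∫ ω, (W i ω : ℝ) * f (fun j => (W (Fin.castLE i.isLt j) ω : ℝ)) ∂μ)
      = lam i * ∫ ω, f (fun j => (Wt i ω j : ℝ)) ∂μ

/-- Codomain types for the joint family consisting of the indices `I i` together with all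
the remaining data (the indicators `X` and the coupled indicators `X'`): `I i` has codomain
`Fin (n i)`, and the remaining data is bundled into a single pair. -/
def SBTarget {d : ℕ} (n : Fin d → ℕ) : Option (Fin d) → Type
  | Option.none => ((j : Fin d) → Fin (n j) → ℕ) ×
      ((i : Fin d) → Fin (n i) → (j : Fin d) → Fin (n j) → ℕ)
  | Option.some i => Fin (n i)

instance {d : ℕ} (n : Fin d → ℕ) (o : Option (Fin d)) : MeasurableSpace (SBTarget n o) := by
  cases o with
  | none => exact inferInstanceAs (MeasurableSpace (_ × _))
  | some i => exact inferInstanceAs (MeasurableSpace (Fin (n i)))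

/-- Restriction of a full array `Z = (Z j k)_{j,k}` to the components relevant for the pair
`(i, ℓ)`: the coordinates `(j, k)` with `j < i`, or `j = i` and `k ≠ ℓ`; the other
coordinates are set to `0`.  Equality of laws of restricted arrays expresses equality of the
joint laws of exactly these components. -/
def sbRestrict {d : ℕ} (n : Fin d → ℕ) (i : Fin d) (ℓ : Fin (n i))
    (Z : (j : Fin d) → Fin (n j) → ℕ) : (j : Fin d) → Fin (n j) → ℕ :=
  fun j k => if j.1 < i.1 ∨ (j.1 = i.1 ∧ k.1 ≠ ℓ.1) then Z j k else 0


section Generic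

variable {Ω : Type*} [MeasurableSpace Ω] {μ : Measure Ω}

theorem setIntegral_eq_measureReal_mul_integral_cond {s : Set Ω} (hs : μ s ≠ ⊤) (F : Ω → ℝ) :
    ∫ ω in s, F ω ∂μ = μ.real s * ∫ ω, F ω ∂μ[|s] := by
  rcases eq_or_ne (μ s) 0 with h0 | h0
  · simp [Measure.restrict_eq_zero.2 h0, measureReal_def, h0]
  · rw [ProbabilityTheory.cond, integral_smul_measure, smul_eq_mul, ← mul_assoc,
      ENNReal.toReal_inv, measureReal_def,
      mul_inv_cancel₀ (ENNReal.toReal_ne_zero.2 ⟨h0, hs⟩), one_mul]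

theorem MeasureTheory.IntegrableOn.integrable_cond {s : Set Ω} {F : Ω → ℝ}
    (hF : IntegrableOn F s μ) : Integrable F μ[|s] := by
  rcases eq_or_ne (μ s) 0 with h0 | h0
  · simp [cond_eq_zero_of_meas_eq_zero h0]
  · exact hF.smul_measure (ENNReal.inv_ne_top.2 h0)

theorem integrableOn_of_integrable_sum_mul {ι : Type*} [Fintype ι] {X : ι → Ω → ℕ}
    (hX : ∀ ℓ, Measurable (X ℓ)) {F : Ω → ℝ} (hF : AEStronglyMeasurable F μ)
    (hint : Integrable (fun ω => ((∑ ℓ, X ℓ ω : ℕ) : ℝ) * F ω) μ) (ℓ : ι) :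
    IntegrableOn F {ω | X ℓ ω = 1} μ := by
  have hA : MeasurableSet {ω | X ℓ ω = 1} := hX ℓ (measurableSet_singleton 1)
  refine (integrable_indicator_iff hA).1 (hint.mono (hF.indicator hA) (ae_of_all _ fun ω => ?_))
  by_cases hω : X ℓ ω = 1
  · have : 1 ≤ ∑ ℓ, X ℓ ω := hω ▸ Finset.single_le_sum (fun k _ => Nat.zero_le (X k ω))
      (Finset.mem_univ ℓ)
    rw [Set.indicator_of_mem (s := {ω | X ℓ ω = 1}) hω, norm_mul, Real.norm_natCast]
    exact le_mul_of_one_le_left (norm_nonneg _) (by exact_mod_cast this)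
  · rw [Set.indicator_of_notMem (s := {ω | X ℓ ω = 1}) hω, norm_zero]
    exact norm_nonneg _

theorem integral_sum_mul_eq_sum_measureReal_mul_integral_cond [IsFiniteMeasure μ]
    {ι : Type*} [Fintype ι] {X : ι → Ω → ℕ} (hX : ∀ ℓ, Measurable (X ℓ))
    (hX₁ : ∀ ℓ ω, X ℓ ω ≤ 1) {F : Ω → ℝ} (hF : AEStronglyMeasurable F μ)
    (hint : Integrable (fun ω => ((∑ ℓ, X ℓ ω : ℕ) : ℝ) * F ω) μ) :
    ∫ ω, ((∑ ℓ, X ℓ ω : ℕ) : ℝ) * F ω ∂μ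
      = ∑ ℓ, μ.real {ω | X ℓ ω = 1} * ∫ ω, F ω ∂μ[|{ω | X ℓ ω = 1}] := by
  have hA : ∀ ℓ, MeasurableSet {ω | X ℓ ω = 1} := fun ℓ => hX ℓ (measurableSet_singleton 1)
  have hpt : ∀ ω, ((∑ ℓ, X ℓ ω : ℕ) : ℝ) * F ω = ∑ ℓ, {ω | X ℓ ω = 1}.indicator F ω := by
    intro ω
    rw [Nat.cast_sum, Finset.sum_mul]
    refine Finset.sum_congr rfl fun ℓ _ => ?_
    rcases Nat.le_one_iff_eq_zero_or_eq_one.1 (hX₁ ℓ ω) with h | h <;> simp [h]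
  simp_rw [hpt]
  rw [integral_finsetSum _ fun ℓ _ =>
    (integrable_indicator_iff (hA ℓ)).2 (integrableOn_of_integrable_sum_mul hX hF hint ℓ)]
  refine Finset.sum_congr rfl fun ℓ _ => ?_
  rw [integral_indicator (hA ℓ), setIntegral_eq_measureReal_mul_integral_cond (measure_ne_top _ _)]

theorem integral_apply_index_eq_sum {ι : Type*} [Fintype ι] [MeasurableSpace ι]
    [MeasurableSingletonClass ι] {I : Ω → ι} (hI : Measurable I) {G : ι → Ω → ℝ}
    (hG : ∀ ℓ, Integrable (G ℓ) μ) (hindep : ∀ ℓ, IndepFun I (G ℓ) μ) :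
    ∫ ω, G (I ω) ω ∂μ = ∑ ℓ, μ.real {ω | I ω = ℓ} * ∫ ω, G ℓ ω ∂μ := by
  have hφ : ∀ ℓ, Measurable (({ℓ} : Set ι).indicator (1 : ι → ℝ)) := fun ℓ =>
    measurable_const.indicator (measurableSet_singleton ℓ)
  have hpt : ∀ ω, G (I ω) ω = ∑ ℓ, ({ℓ} : Set ι).indicator 1 (I ω) * G ℓ ω := by
    intro ω
    rw [Finset.sum_eq_single (I ω) (fun ℓ _ hℓ => by simp [Ne.symm hℓ]) (by simp)]
    simp
  have hint : ∀ ℓ, Integrable (fun ω => ({ℓ} : Set ι).indicator 1 (I ω) * G ℓ ω) μ := fun ℓ =>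
    (hG ℓ).bdd_mul ((hφ ℓ).comp hI).aestronglyMeasurable (c := 1)
      (ae_of_all _ fun ω => by by_cases h : I ω = ℓ <;> simp [h])
  simp_rw [hpt]
  rw [integral_finsetSum _ fun ℓ _ => hint ℓ]
  refine Finset.sum_congr rfl fun ℓ _ => ?_
  refine (((hindep ℓ).comp (hφ ℓ) measurable_id).integral_fun_mul_eq_mul_integral
    ((hφ ℓ).comp hI).aestronglyMeasurable (hG ℓ).aestronglyMeasurable).trans ?_
  congr 1
  exact integral_indicator_one (hI (measurableSet_singleton ℓ))

end Generic

section IndicatorConstruction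

variable {d : ℕ} (n : Fin d → ℕ)

def rowSumsWithOne (i : Fin d) (ℓ : Fin (n i)) (Z : (j : Fin d) → Fin (n j) → ℕ) :
    Fin (i.1 + 1) → ℕ :=
  fun j => if h : j.1 < i.1 then ∑ k, Z ⟨j.1, lt_trans h i.isLt⟩ k
    else (∑ k ∈ Finset.univ.erase ℓ, Z i k) + 1

theorem rowSumsWithOne_sbRestrict (i : Fin d) (ℓ : Fin (n i))
    (Z : (j : Fin d) → Fin (n j) → ℕ) :
    rowSumsWithOne n i ℓ (sbRestrict n i ℓ Z) = rowSumsWithOne n i ℓ Z := by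
  funext j
  unfold rowSumsWithOne
  split_ifs with h
  · exact Finset.sum_congr rfl fun k _ => if_pos (Or.inl h)
  · refine congrArg (· + 1) (Finset.sum_congr rfl fun k hk => if_pos (Or.inr ⟨rfl, ?_⟩))
    exact fun e => Finset.ne_of_mem_erase hk (Fin.ext e)

theorem rowSumsWithOne_of_eq_one {i : Fin d} {ℓ : Fin (n i)}
    {Z : (j : Fin d) → Fin (n j) → ℕ} (h : Z i ℓ = 1) :
    rowSumsWithOne n i ℓ Z = fun j => ∑ k, Z (Fin.castLE i.isLt j) k := by
  funext j
  unfold rowSumsWithOne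
  split_ifs with hj
  · rfl
  · have : Fin.castLE i.isLt j = i := Fin.ext (by simp only [Fin.val_castLE]; omega)
    rw [this, ← Finset.sum_erase_add _ _ (Finset.mem_univ ℓ), h]

theorem identDistrib_rowSumsWithOne_cond {Ω : Type*} [MeasurableSpace Ω] {μ : Measure Ω}
    {X Y : (j : Fin d) → Fin (n j) → Ω → ℕ} (hX : ∀ j k, Measurable (X j k))
    (hY : ∀ j k, Measurable (Y j k)) {i : Fin d} {ℓ : Fin (n i)}
    (hlaw : Measure.map (fun ω => sbRestrict n i ℓ fun j k => Y j k ω) μ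
      = Measure.map (fun ω => sbRestrict n i ℓ fun j k => X j k ω) μ[|{ω | X i ℓ ω = 1}]) :
    IdentDistrib (fun ω => rowSumsWithOne n i ℓ fun j k => Y j k ω)
      (fun ω j => ∑ k, X (Fin.castLE i.isLt j) k ω) μ μ[|{ω | X i ℓ ω = 1}] := by
  have hXm : Measurable fun ω => (fun j k => X j k ω : (j : Fin d) → Fin (n j) → ℕ) :=
    measurable_pi_lambda _ fun j => measurable_pi_lambda _ (hX j)
  have hYm : Measurable fun ω => (fun j k => Y j k ω : (j : Fin d) → Fin (n j) → ℕ) :=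
    measurable_pi_lambda _ fun j => measurable_pi_lambda _ (hY j)
  have hrestrict : IdentDistrib (fun ω => sbRestrict n i ℓ fun j k => Y j k ω)
      (fun ω => sbRestrict n i ℓ fun j k => X j k ω) μ μ[|{ω | X i ℓ ω = 1}] :=
    ⟨((measurable_of_countable (sbRestrict n i ℓ)).comp hYm).aemeasurable,
      ((measurable_of_countable (sbRestrict n i ℓ)).comp hXm).aemeasurable, hlaw⟩
  have hsums := hrestrict.comp (measurable_of_countable (rowSumsWithOne n i ℓ))
  simp only [Function.comp_def, rowSumsWithOne_sbRestrict] at hsums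
  exact hsums.trans (IdentDistrib.of_ae_eq (by fun_prop)
    (ae_cond_of_forall_mem (hX i ℓ (measurableSet_singleton 1))
      fun ω hω => rowSumsWithOne_of_eq_one n hω))

instance : Countable (SBTarget n none) :=
  inferInstanceAs (Countable (_ × _))

instance : MeasurableSingletonClass (SBTarget n none) :=
  inferInstanceAs (MeasurableSingletonClass (_ × _))

theorem SBTarget.measurable_id_some (i : Fin d) :
    Measurable[_, Fin.instMeasurableSpace (n i)] (id : SBTarget n (some i) → Fin (n i)) :=
  fun _ _ => MeasurableSpace.measurableSet_top

end IndicatorConstruction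

/-- The indicator-sum construction yields a size-biased coupling. -/
theorem isSizeBiasedCoupling_of_indicator_construction
    {Ω : Type*} [MeasurableSpace Ω] (μ : Measure Ω) [IsProbabilityMeasure μ]
    {d : ℕ} (n : Fin d → ℕ)
    (X : (j : Fin d) → Fin (n j) → Ω → ℕ)
    (p : (j : Fin d) → Fin (n j) → ℝ)
    (lam : Fin d → ℝ)
    (X' : (i : Fin d) → Fin (n i) → (j : Fin d) → Fin (n j) → Ω → ℕ)
    (I : (i : Fin d) → Ω → Fin (n i))
    (hXmeas : ∀ j k, Measurable (X j k))
    (hX'meas : ∀ i ℓ j k, Measurable (X' i ℓ j k))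
    (hImeas : ∀ i, Measurable (I i))
    -- the `X j k` are indicator random variables with `P(X j k = 1) = p j k ∈ (0,1)`
    (hind : ∀ j k ω, X j k ω ≤ 1)
    (hp : ∀ j k, 0 < p j k ∧ p j k < 1)
    (hpX : ∀ j k, μ {ω | X j k ω = 1} = ENNReal.ofReal (p j k))
    -- `lam i = E (W i) = ∑ k, p i k`
    (hlam : ∀ i, lam i = ∑ k, p i k)
    -- the law of the coupled array for `(i, ℓ)` is the conditional law given `X i ℓ = 1`
    (hlaw : ∀ (i : Fin d) (ℓ : Fin (n i)),
      Measure.map (fun ω => sbRestrict n i ℓ (fun j k => X' i ℓ j k ω)) μ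
        = Measure.map (fun ω => sbRestrict n i ℓ (fun j k => X j k ω))
            (μ[|{ω | X i ℓ ω = 1}]))
    -- `P(I i = j) = p i j / lam i`
    (hI : ∀ (i : Fin d) (j : Fin (n i)), μ {ω | I i ω = j} = ENNReal.ofReal (p i j / lam i))
    -- the `I i` are independent of each other and of all else
    (hindep : iIndepFun
      (fun o : Option (Fin d) => show Ω → SBTarget n o from
        match o with
        | Option.none => fun ω => (fun j k => X j k ω, fun i ℓ j k => X' i ℓ j k ω)
        | Option.some i => I i) μ) :
    IsSizeBiasedCoupling μ (fun j ω => ∑ k, X j k ω) lam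
      (fun i ω j =>
        if h : j.1 < i.1 then
          ∑ k : Fin (n ⟨j.1, lt_trans h i.isLt⟩), X' i (I i ω) ⟨j.1, lt_trans h i.isLt⟩ k ω
        else (∑ k ∈ Finset.univ.erase (I i ω), X' i (I i ω) i k ω) + 1) := by
  intro i f hf
  have hlam_pos : 0 < lam i := hlam i ▸ Finset.sum_pos (fun k _ => (hp i k).1)
    ⟨I i (nonempty_of_isProbabilityMeasure μ).some, Finset.mem_univ _⟩
  set F : (Fin (i.1 + 1) → ℕ) → ℝ := fun v => f fun j => (v j : ℝ)
  set G : Fin (n i) → Ω → ℝ := fun ℓ ω => F (rowSumsWithOne n i ℓ fun j k => X' i ℓ j k ω)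
  have hFW : AEStronglyMeasurable (fun ω => F fun j => ∑ k, X (Fin.castLE i.isLt j) k ω) μ :=
    ((measurable_of_countable F).comp (by fun_prop)).aestronglyMeasurable
  have hid : ∀ ℓ, IdentDistrib (G ℓ) (fun ω => F fun j => ∑ k, X (Fin.castLE i.isLt j) k ω)
      μ μ[|{ω | X i ℓ ω = 1}] := fun ℓ =>
    (identDistrib_rowSumsWithOne_cond n hXmeas (hX'meas i ℓ) (hlaw i ℓ)).comp
      (measurable_of_countable F)
  have hGint : ∀ ℓ, Integrable (G ℓ) μ := fun ℓ =>
    (hid ℓ).integrable_iff.2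
      (integrableOn_of_integrable_sum_mul (hXmeas i) hFW hf ℓ).integrable_cond
  have hGindep : ∀ ℓ, IndepFun (I i) (G ℓ) μ := fun ℓ =>
    (hindep.indepFun (i := some i) (j := none) (by simp)).comp (SBTarget.measurable_id_some n i)
      (measurable_of_countable fun x : SBTarget n none => F (rowSumsWithOne n i ℓ (x.2 i ℓ)))
  calc _ = ∑ ℓ, μ.real {ω | X i ℓ ω = 1} * ∫ ω, F (fun j => ∑ k, X (Fin.castLE i.isLt j) k ω)
          ∂μ[|{ω | X i ℓ ω = 1}] :=
        integral_sum_mul_eq_sum_measureReal_mul_integral_cond (hXmeas i) (hind i) hFW hf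
    _ = ∑ ℓ, p i ℓ * ∫ ω, G ℓ ω ∂μ := by
        refine Finset.sum_congr rfl fun ℓ _ => ?_
        rw [(hid ℓ).integral_eq, measureReal_def, hpX, ENNReal.toReal_ofReal (hp i ℓ).1.le]
    _ = lam i * ∑ ℓ, μ.real {ω | I i ω = ℓ} * ∫ ω, G ℓ ω ∂μ := by
        rw [Finset.mul_sum]
        refine Finset.sum_congr rfl fun ℓ _ => ?_
        rw [measureReal_def, hI, ENNReal.toReal_ofReal (div_nonneg (hp i ℓ).1.le hlam_pos.le)]
        field_simp
    _ = lam i * ∫ ω, G (I i ω) ω ∂μ := by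
        rw [integral_apply_index_eq_sum (hImeas i) hGint hGindep]
end

section
/- Let p = p(n) ∈ (0,1) satisfy p → 0 as n → ∞. Let H_1, ..., H_d be distinct graphs, each with 0 < v_{H_i} ≤ n vertices, e_{H_i} > 0 edges, and no isolated vertices, and let W_i be the number of copies of H_i in G(n,p). For i ∈ {2, ..., d} and j ∈ {1, ..., i−1}, there exists a constant C > 0 such that for all sufficiently large n, |Cov(W_i, W_j)| ≤ C · E(W_i) E(W_j) · Σ_{k ∈ K_{i,j}} p^{-k} n^{-ℓ_{k,i,j}}. -/
open MeasureTheory ProbabilityTheory Filter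
open scoped ENNReal NNReal

/-- The Bernoulli distribution on `Bool` with success probability `p`. -/
noncomputable def bernoulliB (p : ℝ) : Measure Bool :=
  ENNReal.ofReal p • Measure.dirac true + ENNReal.ofReal (1 - p) • Measure.dirac false

instance (p : ℝ) : IsFiniteMeasure (bernoulliB p) := by
  constructor
  simp only [bernoulliB, Measure.add_apply, Measure.smul_apply, smul_eq_mul]
  finiteness

/-- The sample space of the Erdős–Rényi random graph `G(n, p)`: one Boolean coordinate for
each potential edge (non-diagonal unordered pair) of the complete graph on `n` vertices. -/
abbrev EdgeSpace (n : ℕ) := ({e : Sym2 (Fin n) // ¬ e.IsDiag} → Bool)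

/-- The Erdős–Rényi measure: each potential edge is present independently with
probability `p`. -/
noncomputable def erMeasure (n : ℕ) (p : ℝ) : Measure (EdgeSpace n) :=
  Measure.pi fun _ => bernoulliB p

/-- The random graph determined by a point of the sample space. -/
def erGraph {n : ℕ} (ω : EdgeSpace n) : SimpleGraph (Fin n) :=
  SimpleGraph.fromEdgeSet {e | ∃ h : ¬ e.IsDiag, ω ⟨e, h⟩ = true}

/-- `B` is a copy of `H` in the complete graph `K_n`: a subgraph of `K_n`
isomorphic to `H`. -/
def IsCopy {n : ℕ} {V : Type*} (H : SimpleGraph V)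
    (B : (⊤ : SimpleGraph (Fin n)).Subgraph) : Prop :=
  Nonempty (B.coe ≃g H)

/-- The number of copies of `H` in `K_n` all of whose edges are present in `G`. -/
noncomputable def numCopies {n : ℕ} {V : Type*} (H : SimpleGraph V)
    (G : SimpleGraph (Fin n)) : ℕ :=
  Set.ncard {B : (⊤ : SimpleGraph (Fin n)).Subgraph | IsCopy H B ∧ B.edgeSet ⊆ G.edgeSet}

/-- The number of edges shared by two subgraphs of `K_n`. -/
noncomputable def sharedEdges {n : ℕ} (A B : (⊤ : SimpleGraph (Fin n)).Subgraph) : ℕ :=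
  (A ⊓ B).edgeSet.ncard

/-- The number of vertices incident to the edges shared by two subgraphs of `K_n`. -/
noncomputable def sharedVerts {n : ℕ} (A B : (⊤ : SimpleGraph (Fin n)).Subgraph) : ℕ :=
  (A ⊓ B).support.ncard

/-- `K_{i,j}`: the set of possible numbers `k ≥ 1` of shared edges between a copy of `Hi`
and a copy of `Hj` in `K_n`. -/
def sharedK {V W : Type*} (Hi : SimpleGraph V) (Hj : SimpleGraph W) (n : ℕ) : Set ℕ :=
  {k | 1 ≤ k ∧ ∃ A B : (⊤ : SimpleGraph (Fin n)).Subgraph,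
    IsCopy Hi A ∧ IsCopy Hj B ∧ sharedEdges A B = k}

/-- `ℓ_{k,i,j}`: the minimum number of vertices incident to `k` shared edges between a copy
of `Hi` and a copy of `Hj` in `K_n` (`0` if no such pair of copies exists, by the convention
`sInf ∅ = 0` in `ℕ`). -/
noncomputable def minSharedVerts {V W : Type*} (Hi : SimpleGraph V) (Hj : SimpleGraph W)
    (n k : ℕ) : ℕ :=
  sInf {m | ∃ A B : (⊤ : SimpleGraph (Fin n)).Subgraph,
    IsCopy Hi A ∧ IsCopy Hj B ∧ sharedEdges A B = k ∧ sharedVerts A B = m}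

/-!
Write `W_i = ∑_A 1[A ⊆ G(n,p)]` over the copies `A` of `H_i` in `K_n`. Since
`P(A ∪ B ⊆ G(n,p)) = p^(e_i + e_j - k)` when `A` and `B` share `k` edges, the covariance equals
`p^(e_i + e_j) ∑_{A,B} (p^(-k(A,B)) - 1)`, a sum of nonnegative terms to which only pairs sharing
an edge contribute. A pair sharing `k` edges shares at least `ℓ_k` vertices. For a fixed `A`, the
copies `B` of `H_j` containing a given vertex set `S` number at most `v_j^|S| n^(v_j - |S|)`, while
for `n ≥ 2 v_j` there are at least `n^v_j / (2 v_j)^v_j` copies of `H_j` altogether; hence at most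
`C |Γ_i| |Γ_j| n^(-ℓ_k)` pairs share `k` edges.
-/

open Finset Function SimpleGraph
open Fintype (card)
open scoped Classical

lemma card_filter_embedding_subset_range_le {α β : Type*} [Fintype α] [Fintype β]
    (S : Finset β) :
    #{f : α ↪ β | ↑S ⊆ Set.range f} ≤ (card α).descFactorial #S * card β ^ (card α - #S) := by
  have hcover : ({f : α ↪ β | ↑S ⊆ Set.range f} : Finset (α ↪ β)) ⊆
      (univ : Finset (S ↪ α)).biUnion fun c => {f : α ↪ β | ∀ s, f (c s) = s} := by
    intro f hf
    have hsurj : ∀ s : S, ∃ x, f x = s := fun s => (mem_filter.mp hf).2 s.2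
    choose c hc using hsurj
    have hc_inj : Injective c := fun s t hst => Subtype.ext <| by rw [← hc s, ← hc t, hst]
    exact mem_biUnion.mpr ⟨⟨c, hc_inj⟩, mem_univ _, mem_filter.mpr ⟨mem_univ _, hc⟩⟩
  have hfiber (c : S ↪ α) : #{f : α ↪ β | ∀ s, f (c s) = s} ≤ card β ^ (card α - #S) :=
    calc #{f : α ↪ β | ∀ s, f (c s) = s}
        ≤ card ({x // x ∉ Set.range c} → β) := by
          refine card_le_card_of_injOn (fun f x => f x) (fun _ _ => mem_univ _) ?_
          intro f hf g hg hfg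
          simp only [coe_filter, mem_univ, true_and] at hf hg
          refine DFunLike.ext _ _ fun x => ?_
          by_cases hx : x ∈ Set.range c
          · obtain ⟨s, rfl⟩ := hx
            rw [hf s, hg s]
          · exact congrFun hfg ⟨x, hx⟩
      _ = card β ^ (card α - #S) := by
          rw [Fintype.card_fun, Fintype.card_subtype_compl,
            Set.card_range_of_injective c.injective, Fintype.card_coe]
  calc #{f : α ↪ β | ↑S ⊆ Set.range f}
      ≤ ∑ c : S ↪ α, #{f : α ↪ β | ∀ s, f (c s) = s} :=
        (card_le_card hcover).trans card_biUnion_le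
    _ ≤ ∑ _c : S ↪ α, card β ^ (card α - #S) := sum_le_sum fun c _ => hfiber c
    _ = (card α).descFactorial #S * card β ^ (card α - #S) := by
        rw [sum_const, card_univ, Fintype.card_embedding_eq, Fintype.card_coe, smul_eq_mul]

lemma descFactorial_mul_pow_sub_mul_pow_le (b s n : ℕ) :
    b.descFactorial s * n ^ (b - s) * n ^ s ≤ b ^ s * n ^ b := by
  rcases le_or_gt s b with hsb | hbs
  · rw [mul_assoc, ← pow_add, Nat.sub_add_cancel hsb]
    exact Nat.mul_le_mul_right _ (Nat.descFactorial_le_pow b s)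
  · simp [Nat.descFactorial_eq_zero_iff_lt.mpr hbs]

section Copies

variable {V W : Type*} {n : ℕ}

def copyOfEmbedding (H : SimpleGraph V) (f : V ↪ W) : H.Copy (⊤ : SimpleGraph W) :=
  ⟨⟨f, fun h => f.injective.ne h.ne⟩, f.injective⟩

lemma verts_toSubgraph_copyOfEmbedding (H : SimpleGraph V) (f : V ↪ W) :
    (copyOfEmbedding H f).toSubgraph.verts = Set.range f := by
  simp [copyOfEmbedding, Copy.toSubgraph]

lemma isCopy_iff_exists_embedding {H : SimpleGraph V} {B : (⊤ : SimpleGraph (Fin n)).Subgraph} :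
    IsCopy H B ↔ ∃ f : V ↪ Fin n, (copyOfEmbedding H f).toSubgraph = B := by
  have hrange := congrArg (B ∈ ·) (Copy.range_toSubgraph (A := H) (B := ⊤))
  simp only [Set.mem_range, Set.mem_ofPred_eq] at hrange
  refine ⟨fun ⟨e⟩ => ?_, fun ⟨f, hf⟩ => ?_⟩
  · obtain ⟨c, hc⟩ := hrange.mpr ⟨e.symm⟩
    exact ⟨c.toEmbedding, hc⟩
  · exact (hrange.mp ⟨_, hf⟩).elim fun e => ⟨e.symm⟩

/-- The paper's `Γ`. -/
noncomputable def copies (H : SimpleGraph V) (n : ℕ) :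
    Finset ((⊤ : SimpleGraph (Fin n)).Subgraph) :=
  (Set.toFinite {B | IsCopy H B}).toFinset

@[simp]
lemma mem_copies {H : SimpleGraph V} {B : (⊤ : SimpleGraph (Fin n)).Subgraph} :
    B ∈ copies H n ↔ IsCopy H B :=
  Set.Finite.mem_toFinset _

lemma IsCopy.ncard_verts [Fintype V] {H : SimpleGraph V} {B : (⊤ : SimpleGraph (Fin n)).Subgraph}
    (h : IsCopy H B) : B.verts.ncard = card V := by
  obtain ⟨e⟩ := h
  rw [← Nat.card_coe_set_eq, Nat.card_congr e.toEquiv, Nat.card_eq_fintype_card]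

lemma IsCopy.ncard_edgeSet {H : SimpleGraph V} {B : (⊤ : SimpleGraph (Fin n)).Subgraph}
    (h : IsCopy H B) : B.edgeSet.ncard = H.edgeSet.ncard := by
  obtain ⟨e⟩ := h
  rw [← Subgraph.image_coe_edgeSet_coe B,
    Set.ncard_image_of_injective _ (Sym2.map.injective Subtype.val_injective),
    ← Nat.card_coe_set_eq, ← Nat.card_coe_set_eq]
  exact Nat.card_congr e.mapEdgeSet

lemma card_copies_filter_subset_verts_le [Fintype V] (H : SimpleGraph V) (S : Finset (Fin n)) :
    #{B ∈ copies H n | ↑S ⊆ B.verts} ≤ (card V).descFactorial #S * n ^ (card V - #S) :=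
  calc #{B ∈ copies H n | ↑S ⊆ B.verts}
      ≤ #(({f : V ↪ Fin n | ↑S ⊆ Set.range f} : Finset _).image
          fun f => (copyOfEmbedding H f).toSubgraph) := by
        refine card_le_card fun B hB => ?_
        obtain ⟨hB, hS⟩ := mem_filter.mp hB
        obtain ⟨f, rfl⟩ := isCopy_iff_exists_embedding.mp (mem_copies.mp hB)
        rw [verts_toSubgraph_copyOfEmbedding] at hS
        exact mem_image_of_mem _ (mem_filter.mpr ⟨mem_univ _, hS⟩)
    _ ≤ #({f : V ↪ Fin n | ↑S ⊆ Set.range f} : Finset _) := card_image_le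
    _ ≤ (card V).descFactorial #S * n ^ (card V - #S) := by
        simpa using card_filter_embedding_subset_range_le (α := V) S

lemma card_embedding_le_mul_card_copies [Fintype V] (H : SimpleGraph V) :
    card (V ↪ Fin n) ≤ card V ^ card V * #(copies H n) := by
  let toCopy (f : V ↪ Fin n) : (⊤ : SimpleGraph (Fin n)).Subgraph :=
    (copyOfEmbedding H f).toSubgraph
  have himage : univ.image toCopy ⊆ copies H n := by
    intro B hB
    obtain ⟨f, -, rfl⟩ := mem_image.mp hB
    exact mem_copies.mpr (isCopy_iff_exists_embedding.mpr ⟨f, rfl⟩)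
  refine (card_le_mul_card_image univ _ fun B hB => ?_).trans
    (Nat.mul_le_mul_left _ (card_le_card himage))
  obtain ⟨f₀, -, rfl⟩ := mem_image.mp hB
  calc #{f ∈ univ | toCopy f = toCopy f₀}
      ≤ #(Fintype.piFinset fun _ : V => univ.image f₀) := by
        refine card_le_card_of_injOn (fun f => ⇑f) (fun f hf => ?_)
          (fun f _ g _ h => DFunLike.coe_injective h)
        have hrange := congrArg Subgraph.verts (mem_filter.mp hf).2
        simp only [toCopy, verts_toSubgraph_copyOfEmbedding] at hrange
        simp only [Fintype.coe_piFinset, Set.mem_pi, Set.mem_univ, coe_image, coe_univ,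
          Set.image_univ, forall_const]
        exact fun x => hrange ▸ Set.mem_range_self x
    _ = card V ^ card V := by
        simp [Fintype.card_piFinset, card_image_of_injective _ f₀.injective]

lemma pow_le_card_copies [Fintype V] (H : SimpleGraph V) (hn : 2 * card V ≤ n) :
    n ^ card V ≤ 2 ^ card V * card V ^ card V * #(copies H n) := by
  set b := card V
  calc n ^ b ≤ (2 * (n + 1 - b)) ^ b := Nat.pow_le_pow_left (by omega) b
    _ = 2 ^ b * (n + 1 - b) ^ b := mul_pow 2 _ b
    _ ≤ 2 ^ b * card (V ↪ Fin n) := by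
        rw [Fintype.card_embedding_eq, Fintype.card_fin]
        exact Nat.mul_le_mul_left _ (Nat.pow_sub_le_descFactorial n b)
    _ ≤ 2 ^ b * (b ^ b * #(copies H n)) :=
        Nat.mul_le_mul_left _ (card_embedding_le_mul_card_copies H)
    _ = 2 ^ b * b ^ b * #(copies H n) := (mul_assoc _ _ _).symm

lemma card_copies_filter_le_ncard_inter_mul_pow_le [Fintype V] (H : SimpleGraph V) (hn : 0 < n)
    (A : (⊤ : SimpleGraph (Fin n)).Subgraph) (ℓ : ℕ) :
    #{B ∈ copies H n | ℓ ≤ (A.verts ∩ B.verts).ncard} * n ^ ℓ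
      ≤ (card V + 1) ^ A.verts.ncard * n ^ card V := by
  set b := card V
  let 𝒮 := {S ∈ A.verts.toFinset.powerset | ℓ ≤ #S}
  have hcover : {B ∈ copies H n | ℓ ≤ (A.verts ∩ B.verts).ncard}
      ⊆ 𝒮.biUnion fun S => {B ∈ copies H n | ↑S ⊆ B.verts} := by
    intro B hB
    obtain ⟨hB, hℓ⟩ := mem_filter.mp hB
    refine mem_biUnion.mpr ⟨(A.verts ∩ B.verts).toFinset, ?_, mem_filter.mpr ⟨hB, by simp⟩⟩
    refine mem_filter.mpr ⟨mem_powerset.mpr ?_, ?_⟩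
    · exact Set.toFinset_subset_toFinset.mpr Set.inter_subset_left
    · rwa [← Set.ncard_eq_toFinset_card']
  have hS : ∀ S ∈ 𝒮, #{B ∈ copies H n | ↑S ⊆ B.verts} * n ^ ℓ ≤ b ^ #S * n ^ b := by
    intro S hS
    calc #{B ∈ copies H n | ↑S ⊆ B.verts} * n ^ ℓ
        ≤ b.descFactorial #S * n ^ (b - #S) * n ^ #S :=
          Nat.mul_le_mul (card_copies_filter_subset_verts_le H S)
            (Nat.pow_le_pow_right hn (mem_filter.mp hS).2)
      _ ≤ b ^ #S * n ^ b := descFactorial_mul_pow_sub_mul_pow_le b #S n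
  calc #{B ∈ copies H n | ℓ ≤ (A.verts ∩ B.verts).ncard} * n ^ ℓ
      ≤ (∑ S ∈ 𝒮, #{B ∈ copies H n | ↑S ⊆ B.verts}) * n ^ ℓ :=
        Nat.mul_le_mul_right _ ((card_le_card hcover).trans card_biUnion_le)
    _ ≤ ∑ S ∈ 𝒮, b ^ #S * n ^ b := by
        rw [sum_mul]
        exact sum_le_sum hS
    _ ≤ ∑ S ∈ A.verts.toFinset.powerset, b ^ #S * 1 ^ (#A.verts.toFinset - #S) * n ^ b := by
        simp only [one_pow, mul_one]
        exact sum_le_sum_of_subset (filter_subset _ _)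
    _ = (b + 1) ^ A.verts.ncard * n ^ b := by
        rw [← sum_mul, Finset.sum_pow_mul_eq_add_pow, Set.ncard_eq_toFinset_card']

end Copies

section SharedEdges

variable {V W : Type*} {n : ℕ}

lemma minSharedVerts_le_ncard_inter {Hi : SimpleGraph V} {Hj : SimpleGraph W}
    {A B : (⊤ : SimpleGraph (Fin n)).Subgraph} (hA : IsCopy Hi A) (hB : IsCopy Hj B) :
    minSharedVerts Hi Hj n (sharedEdges A B) ≤ (A.verts ∩ B.verts).ncard :=
  calc minSharedVerts Hi Hj n (sharedEdges A B) ≤ sharedVerts A B :=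
        Nat.sInf_le ⟨A, B, hA, hB, rfl, rfl⟩
    _ ≤ (A.verts ∩ B.verts).ncard := by
        rw [sharedVerts, ← Subgraph.verts_inf]
        exact Set.ncard_le_ncard (Subgraph.support_subset_verts _)

lemma ncard_edgeSet_sup_add_sharedEdges (A B : (⊤ : SimpleGraph (Fin n)).Subgraph) :
    (A ⊔ B).edgeSet.ncard + sharedEdges A B = A.edgeSet.ncard + B.edgeSet.ncard := by
  rw [sharedEdges, Subgraph.edgeSet_sup, Subgraph.edgeSet_inf, Set.ncard_union_add_ncard_inter]

/-- The paper's `S_k(i,j)`. -/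
noncomputable def pairsSharing (Hi : SimpleGraph V) (Hj : SimpleGraph W) (n k : ℕ) :
    Finset ((⊤ : SimpleGraph (Fin n)).Subgraph × (⊤ : SimpleGraph (Fin n)).Subgraph) :=
  {AB ∈ copies Hi n ×ˢ copies Hj n | sharedEdges AB.1 AB.2 = k}

noncomputable def sharedEdgeCounts (Hi : SimpleGraph V) (Hj : SimpleGraph W) (n : ℕ) :
    Finset ℕ :=
  {k ∈ (copies Hi n ×ˢ copies Hj n).image (fun AB => sharedEdges AB.1 AB.2) | 1 ≤ k}

lemma coe_sharedEdgeCounts (Hi : SimpleGraph V) (Hj : SimpleGraph W) :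
    ↑(sharedEdgeCounts Hi Hj n) = sharedK Hi Hj n := by
  ext k
  simp [sharedEdgeCounts, sharedK, and_comm, and_assoc]

variable [Fintype V] [Fintype W] (Hi : SimpleGraph V) (Hj : SimpleGraph W)

lemma card_pairsSharing_mul_pow_le (hn : 2 * card W ≤ n) (hn0 : 0 < n) (k : ℕ) :
    #(pairsSharing Hi Hj n k) * n ^ minSharedVerts Hi Hj n k
      ≤ (card W + 1) ^ card V * 2 ^ card W * card W ^ card W
          * #(copies Hi n) * #(copies Hj n) := by
  set ℓ := minSharedVerts Hi Hj n k
  have hfiber : ∀ A ∈ copies Hi n,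
      #{B ∈ copies Hj n | sharedEdges A B = k} * n ^ ℓ ≤ (card W + 1) ^ card V * n ^ card W := by
    intro A hA
    rw [← (mem_copies.mp hA).ncard_verts]
    refine le_trans (Nat.mul_le_mul_right _ (card_le_card (monotone_filter_right _ ?_)))
      (card_copies_filter_le_ncard_inter_mul_pow_le Hj hn0 A ℓ)
    rintro B hB rfl
    exact minSharedVerts_le_ncard_inter (mem_copies.mp hA) (mem_copies.mp hB)
  calc #(pairsSharing Hi Hj n k) * n ^ ℓ
      = ∑ A ∈ copies Hi n, #{B ∈ copies Hj n | sharedEdges A B = k} * n ^ ℓ := by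
        simp only [pairsSharing, card_filter, sum_product, ← sum_mul]
    _ ≤ ∑ _A ∈ copies Hi n, (card W + 1) ^ card V * n ^ card W := sum_le_sum hfiber
    _ ≤ #(copies Hi n) * ((card W + 1) ^ card V
          * (2 ^ card W * card W ^ card W * #(copies Hj n))) := by
        rw [sum_const, smul_eq_mul]
        exact Nat.mul_le_mul_left _ (Nat.mul_le_mul_left _ (pow_le_card_copies Hj hn))
    _ = _ := by ring

lemma card_pairsSharing_le_mul_zpow (hn : 2 * card W ≤ n) (hn0 : 0 < n) (k : ℕ) :
    (#(pairsSharing Hi Hj n k) : ℝ)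
      ≤ ((card W + 1) ^ card V * 2 ^ card W * card W ^ card W : ℕ)
          * #(copies Hi n) * #(copies Hj n) * (n : ℝ) ^ (-(minSharedVerts Hi Hj n k : ℤ)) := by
  rw [zpow_neg, zpow_natCast, ← div_eq_mul_inv, le_div_iff₀ (by positivity)]
  exact_mod_cast card_pairsSharing_mul_pow_le Hi Hj hn hn0 k

end SharedEdges

section RandomGraph

instance (n : ℕ) (p : ℝ) : IsFiniteMeasure (erMeasure n p) := by
  unfold erMeasure; infer_instance

lemma bernoulliB_singleton_true (p : ℝ) : bernoulliB p {true} = ENNReal.ofReal p := by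
  simp [bernoulliB]

lemma bernoulliB_univ {p : ℝ} (hp0 : 0 ≤ p) (hp1 : p ≤ 1) : bernoulliB p Set.univ = 1 := by
  simp [bernoulliB, ← ENNReal.ofReal_add hp0 (sub_nonneg.mpr hp1)]

variable {V W : Type*} {n : ℕ} {p : ℝ}

lemma mem_edgeSet_erGraph (ω : EdgeSpace n) (e : {e : Sym2 (Fin n) // ¬ e.IsDiag}) :
    e.1 ∈ (erGraph ω).edgeSet ↔ ω e = true := by
  simp [erGraph, e.2]

lemma erMeasure_setOf_subset_edgeSet (hp0 : 0 ≤ p) (hp1 : p ≤ 1) {s : Set (Sym2 (Fin n))}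
    (hs : ∀ e ∈ s, ¬ e.IsDiag) :
    erMeasure n p {ω | s ⊆ (erGraph ω).edgeSet} = ENNReal.ofReal p ^ s.ncard := by
  let edges : Finset {e : Sym2 (Fin n) // ¬ e.IsDiag} := {e | e.1 ∈ s}
  have hset : {ω : EdgeSpace n | s ⊆ (erGraph ω).edgeSet}
      = Set.univ.pi fun e => if e ∈ edges then {true} else Set.univ := by
    ext ω
    simp only [Set.mem_ofPred_eq, Set.mem_pi, Set.mem_univ, true_implies]
    refine ⟨fun h e => ?_, fun h x hx => ?_⟩
    · split_ifs with he
      · exact (mem_edgeSet_erGraph ω e).mp (h (mem_filter.mp he).2)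
      · trivial
    · exact (mem_edgeSet_erGraph ω ⟨x, hs x hx⟩).mpr (by simpa [edges, hx] using h ⟨x, hs x hx⟩)
  have hcard : s.ncard = #edges := by
    have : s = Subtype.val '' (edges : Set {e : Sym2 (Fin n) // ¬ e.IsDiag}) := by
      ext x
      simpa [edges] using fun hx => hs x hx
    rw [this, Set.ncard_image_of_injective _ Subtype.val_injective, Set.ncard_coe_finset]
  rw [hset, erMeasure, Measure.pi_pi, hcard]
  simp_rw [apply_ite (bernoulliB p), bernoulliB_singleton_true, bernoulliB_univ hp0 hp1]
  rw [Fintype.prod_ite_mem, prod_const]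

lemma integral_indicator_edgeSet_subset (hp0 : 0 ≤ p) (hp1 : p ≤ 1)
    (A : (⊤ : SimpleGraph (Fin n)).Subgraph) :
    ∫ ω, {ω | A.edgeSet ⊆ (erGraph ω).edgeSet}.indicator (1 : EdgeSpace n → ℝ) ω
      ∂erMeasure n p = p ^ A.edgeSet.ncard := by
  have hs : ∀ e ∈ A.edgeSet, ¬ e.IsDiag := fun e he =>
    not_isDiag_of_mem_edgeSet _ (A.edgeSet_subset he)
  rw [integral_indicator_one (.of_discrete), measureReal_def,
    erMeasure_setOf_subset_edgeSet hp0 hp1 hs, ENNReal.toReal_pow, ENNReal.toReal_ofReal hp0]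

lemma numCopies_erGraph_eq_sum (H : SimpleGraph V) (ω : EdgeSpace n) :
    (numCopies H (erGraph ω) : ℝ)
      = ∑ A ∈ copies H n, {ω | A.edgeSet ⊆ (erGraph ω).edgeSet}.indicator 1 ω := by
  have hset : {B | IsCopy H B ∧ B.edgeSet ⊆ (erGraph ω).edgeSet}
      = ↑({A ∈ copies H n | A.edgeSet ⊆ (erGraph ω).edgeSet}) := by
    ext B; simp
  rw [numCopies, hset, Set.ncard_coe_finset, card_filter]
  push_cast
  simp [Set.indicator_apply]

lemma integral_numCopies (H : SimpleGraph V) (hp0 : 0 ≤ p) (hp1 : p ≤ 1) :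
    ∫ ω, (numCopies H (erGraph ω) : ℝ) ∂erMeasure n p = #(copies H n) * p ^ H.edgeSet.ncard := by
  simp_rw [numCopies_erGraph_eq_sum]
  rw [integral_finsetSum _ fun _ _ => .of_finite]
  rw [sum_congr rfl fun A hA => by
    rw [integral_indicator_edgeSet_subset hp0 hp1, (mem_copies.mp hA).ncard_edgeSet]]
  rw [sum_const, nsmul_eq_mul]

lemma integral_numCopies_mul (Hi : SimpleGraph V) (Hj : SimpleGraph W) (hp0 : 0 ≤ p)
    (hp1 : p ≤ 1) :
    ∫ ω, (numCopies Hi (erGraph ω) : ℝ) * numCopies Hj (erGraph ω) ∂erMeasure n p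
      = ∑ A ∈ copies Hi n, ∑ B ∈ copies Hj n, p ^ (A ⊔ B).edgeSet.ncard := by
  have hsup (A B : (⊤ : SimpleGraph (Fin n)).Subgraph) :
      {ω | (A ⊔ B).edgeSet ⊆ (erGraph ω).edgeSet}
        = {ω | A.edgeSet ⊆ (erGraph ω).edgeSet} ∩ {ω | B.edgeSet ⊆ (erGraph ω).edgeSet} := by
    ext ω; simp [Subgraph.edgeSet_sup, Set.union_subset_iff]
  have hprod (ω : EdgeSpace n) : (numCopies Hi (erGraph ω) : ℝ) * numCopies Hj (erGraph ω)
      = ∑ A ∈ copies Hi n, ∑ B ∈ copies Hj n,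
          {ω | (A ⊔ B).edgeSet ⊆ (erGraph ω).edgeSet}.indicator 1 ω := by
    simp only [numCopies_erGraph_eq_sum, sum_mul_sum, hsup, Set.inter_indicator_one, Pi.mul_apply]
  simp_rw [hprod]
  rw [integral_finsetSum _ fun _ _ => .of_finite]
  refine sum_congr rfl fun A _ => ?_
  rw [integral_finsetSum _ fun _ _ => .of_finite]
  exact sum_congr rfl fun B _ => integral_indicator_edgeSet_subset hp0 hp1 _

end RandomGraph

section Covariance

variable {V W : Type*} (Hi : SimpleGraph V) (Hj : SimpleGraph W) {n : ℕ} {p : ℝ}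

lemma sum_pow_sup_sub_eq (hp : p ≠ 0) :
    ∑ A ∈ copies Hi n, ∑ B ∈ copies Hj n, p ^ (A ⊔ B).edgeSet.ncard
        - #(copies Hi n) * p ^ Hi.edgeSet.ncard * (#(copies Hj n) * p ^ Hj.edgeSet.ncard)
      = p ^ (Hi.edgeSet.ncard + Hj.edgeSet.ncard)
          * ∑ AB ∈ copies Hi n ×ˢ copies Hj n, (p ^ (-(sharedEdges AB.1 AB.2 : ℤ)) - 1) := by
  have hterm : ∀ A ∈ copies Hi n, ∀ B ∈ copies Hj n, p ^ (A ⊔ B).edgeSet.ncard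
      = p ^ (Hi.edgeSet.ncard + Hj.edgeSet.ncard) * p ^ (-(sharedEdges A B : ℤ)) := by
    intro A hA B hB
    have h := ncard_edgeSet_sup_add_sharedEdges A B
    rw [(mem_copies.mp hA).ncard_edgeSet, (mem_copies.mp hB).ncard_edgeSet] at h
    rw [← h, ← zpow_natCast, ← zpow_natCast, ← zpow_add₀ hp]
    push_cast
    ring_nf
  simp only [mul_sub, mul_sum, sum_sub_distrib, sum_product, sum_const, card_product]
  rw [sum_congr rfl fun A hA => sum_congr rfl fun B hB => hterm A hA B hB]
  ring

lemma sum_zpow_sharedEdges_sub_one_eq :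
    ∑ AB ∈ copies Hi n ×ˢ copies Hj n, (p ^ (-(sharedEdges AB.1 AB.2 : ℤ)) - 1)
      = ∑ k ∈ sharedEdgeCounts Hi Hj n, #(pairsSharing Hi Hj n k) * (p ^ (-(k : ℤ)) - 1) := by
  rw [sum_comp (fun k : ℕ => p ^ (-(k : ℤ)) - 1), sharedEdgeCounts, sum_filter_of_ne]
  · simp only [pairsSharing, nsmul_eq_mul]
  · intro k _ hk
    by_contra h0
    simp [show k = 0 by omega] at hk

lemma abs_covariance_numCopies_le [Fintype V] [Fintype W] (hn : 2 * card W ≤ n) (hn0 : 0 < n)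
    (hp0 : 0 < p) (hp1 : p ≤ 1) :
    |(∫ ω, (numCopies Hi (erGraph ω) : ℝ) * numCopies Hj (erGraph ω) ∂erMeasure n p)
        - (∫ ω, (numCopies Hi (erGraph ω) : ℝ) ∂erMeasure n p)
          * ∫ ω, (numCopies Hj (erGraph ω) : ℝ) ∂erMeasure n p|
      ≤ ((card W + 1) ^ card V * 2 ^ card W * card W ^ card W : ℕ)
          * (∫ ω, (numCopies Hi (erGraph ω) : ℝ) ∂erMeasure n p)
          * (∫ ω, (numCopies Hj (erGraph ω) : ℝ) ∂erMeasure n p)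
          * ∑ᶠ k ∈ sharedK Hi Hj n,
              p ^ (-(k : ℤ)) * (n : ℝ) ^ (-(minSharedVerts Hi Hj n k : ℤ)) := by
  set C : ℕ := (card W + 1) ^ card V * 2 ^ card W * card W ^ card W
  have hnonneg :
      0 ≤ ∑ AB ∈ copies Hi n ×ˢ copies Hj n, (p ^ (-(sharedEdges AB.1 AB.2 : ℤ)) - 1) :=
    sum_nonneg fun AB _ => sub_nonneg.mpr (one_le_zpow_of_nonpos₀ hp0 hp1 (by simp))
  have hterm (k : ℕ) : #(pairsSharing Hi Hj n k) * (p ^ (-(k : ℤ)) - 1)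
      ≤ C * #(copies Hi n) * #(copies Hj n)
          * (p ^ (-(k : ℤ)) * (n : ℝ) ^ (-(minSharedVerts Hi Hj n k : ℤ))) :=
    calc #(pairsSharing Hi Hj n k) * (p ^ (-(k : ℤ)) - 1)
        ≤ #(pairsSharing Hi Hj n k) * p ^ (-(k : ℤ)) := by gcongr; linarith
      _ ≤ C * #(copies Hi n) * #(copies Hj n) * (n : ℝ) ^ (-(minSharedVerts Hi Hj n k : ℤ))
            * p ^ (-(k : ℤ)) := by
          gcongr
          exact card_pairsSharing_le_mul_zpow Hi Hj hn hn0 k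
      _ = _ := by ring
  rw [integral_numCopies_mul Hi Hj hp0.le hp1, integral_numCopies Hi hp0.le hp1,
    integral_numCopies Hj hp0.le hp1, sum_pow_sup_sub_eq Hi Hj hp0.ne',
    abs_of_nonneg (mul_nonneg (by positivity) hnonneg), sum_zpow_sharedEdges_sub_one_eq,
    ← coe_sharedEdgeCounts, finsum_mem_coe_finset, pow_add]
  calc p ^ Hi.edgeSet.ncard * p ^ Hj.edgeSet.ncard * ∑ k ∈ sharedEdgeCounts Hi Hj n,
        #(pairsSharing Hi Hj n k) * (p ^ (-(k : ℤ)) - 1)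
      ≤ p ^ Hi.edgeSet.ncard * p ^ Hj.edgeSet.ncard * ∑ k ∈ sharedEdgeCounts Hi Hj n,
          C * #(copies Hi n) * #(copies Hj n)
            * (p ^ (-(k : ℤ)) * (n : ℝ) ^ (-(minSharedVerts Hi Hj n k : ℤ))) :=
        mul_le_mul_of_nonneg_left (sum_le_sum fun k _ => hterm k) (by positivity)
    _ = _ := by
        rw [← mul_sum]
        ring

end Covariance

theorem covariance_subgraph_counts_bound_general
    (p : ℕ → ℝ) (hp : ∀ n, 0 < p n ∧ p n < 1)
    {d : ℕ} (v : Fin d → ℕ) (H : (i : Fin d) → SimpleGraph (Fin (v i)))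
    (i j : Fin d)
    (W : (n : ℕ) → Fin d → EdgeSpace n → ℕ)
    (hWdef : ∀ n i ω, W n i ω = numCopies (H i) (erGraph ω)) :
    ∃ C > (0 : ℝ), ∀ᶠ n in atTop,
      |(∫ ω, (W n i ω : ℝ) * (W n j ω : ℝ) ∂erMeasure n (p n))
          - (∫ ω, (W n i ω : ℝ) ∂erMeasure n (p n))
              * ∫ ω, (W n j ω : ℝ) ∂erMeasure n (p n)|
        ≤ C * (∫ ω, (W n i ω : ℝ) ∂erMeasure n (p n))
            * (∫ ω, (W n j ω : ℝ) ∂erMeasure n (p n))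
            * ∑ᶠ k ∈ sharedK (H i) (H j) n,
                (p n) ^ (-(k : ℤ)) * (n : ℝ) ^ (-(minSharedVerts (H i) (H j) n k : ℤ)) := by
  refine ⟨((v j + 1) ^ v i * 2 ^ v j * v j ^ v j : ℕ), ?_, ?_⟩
  · have := @Nat.pow_self_pos (v j)
    positivity
  filter_upwards [eventually_ge_atTop (2 * v j), eventually_gt_atTop 0] with n hn hn0
  simp only [hWdef]
  simpa using abs_covariance_numCopies_le (H i) (H j) (by simpa using hn) hn0 (hp n).1 (hp n).2.le

/-- The covariance of two subgraph counts is
`O(E(W_i) E(W_j) ∑_{k ∈ K_{i,j}} p^{-k} n^{-ℓ_{k,i,j}})` as `n → ∞` when `p = p(n) → 0`. -/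
theorem covariance_subgraph_counts_bound
    (p : ℕ → ℝ) (hp : ∀ n, 0 < p n ∧ p n < 1)
    (hp0 : Tendsto p atTop (nhds 0))
    {d : ℕ} (v : Fin d → ℕ) (H : (i : Fin d) → SimpleGraph (Fin (v i)))
    (hv : ∀ i, 0 < v i)
    (he : ∀ i, (H i).edgeSet.Nonempty)
    (hnoiso : ∀ i x, ∃ y, (H i).Adj x y)
    (hdist : ∀ i j, i ≠ j → IsEmpty (H i ≃g H j))
    (i j : Fin d) (hji : j < i)
    (W : (n : ℕ) → Fin d → EdgeSpace n → ℕ)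
    (hWdef : ∀ n i ω, W n i ω = numCopies (H i) (erGraph ω)) :
    ∃ C > (0 : ℝ), ∀ᶠ n in atTop,
      |(∫ ω, (W n i ω : ℝ) * (W n j ω : ℝ) ∂erMeasure n (p n))
          - (∫ ω, (W n i ω : ℝ) ∂erMeasure n (p n))
              * ∫ ω, (W n j ω : ℝ) ∂erMeasure n (p n)|
        ≤ C * (∫ ω, (W n i ω : ℝ) ∂erMeasure n (p n))
            * (∫ ω, (W n j ω : ℝ) ∂erMeasure n (p n))
            * ∑ᶠ k ∈ sharedK (H i) (H j) n,
                (p n) ^ (-(k : ℤ)) * (n : ℝ) ^ (-(minSharedVerts (H i) (H j) n k : ℤ)) :=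
  covariance_subgraph_counts_bound_general p hp v H i j W hWdef
end
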